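/- arXiv:2301.02223 — 10 statements merged into one kernel-verified Lean document; each statement's English description precedes it below -/
import Mathlib

section
/- Let n, r be positive integers, c, d integers, and B the r×r matrix with diagonal entries c and off-diagonal entries d. Let 𝒹₁ = gcd(c−d, n). A vector x = (x₁,...,x_r) ∈ ℤ^r satisfies B·x ≡ a·(1,...,1)^T (mod n) for some integer a if and only if for each j with 2 ≤ j ≤ r there exists an integer v_j such that x_j ≡ x₁ + v_j·(n/𝒹₁) (mod n). -/
/-!
The `i`-th entry of `B x` is `(c - d) x_i + d ∑ x`, so `B x` is constant mod `n` exactly when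
`(c - d) x_j ≡ (c - d) x_1 (mod n)` for all `j`; cancelling `c - d` turns this into
`x_j ≡ x_1 (mod n / gcd(c - d, n))`.
-/

namespace Int

theorem mul_modEq_mul_left_iff {m a b c : ℤ} (hm : 0 < m) :
    c * a ≡ c * b [ZMOD m] ↔ a ≡ b [ZMOD m / gcd m c] := by
  refine ⟨ModEq.cancel_left_div_gcd hm, fun h => ?_⟩
  have hdvd : m / gcd m c * gcd m c ∣ (b - a) * c :=
    mul_dvd_mul h.dvd (gcd_dvd_right m c)
  rw [Int.ediv_mul_cancel (gcd_dvd_left m c)] at hdvd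
  exact modEq_iff_dvd.mpr (by rwa [← mul_sub, mul_comm])

theorem exists_modEq_add_mul_iff {n m a b : ℤ} (hmn : m ∣ n) :
    (∃ v, a ≡ b + v * m [ZMOD n]) ↔ a ≡ b [ZMOD m] := by
  constructor
  · rintro ⟨v, hv⟩
    calc a ≡ b + v * m [ZMOD m] := hv.of_dvd hmn
      _ ≡ b [ZMOD m] := by simp [ModEq]
  · intro h
    obtain ⟨v, hv⟩ := modEq_iff_add_fac.mp h.symm
    exact ⟨v, by rw [hv, mul_comm]⟩

theorem exists_forall_modEq_iff {ι : Type*} {n : ℤ} (f : ι → ℤ) (i₀ : ι) :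
    (∃ a, ∀ i, f i ≡ a [ZMOD n]) ↔ ∀ j, j ≠ i₀ → f j ≡ f i₀ [ZMOD n] := by
  constructor
  · rintro ⟨a, ha⟩ j -
    exact (ha j).trans (ha i₀).symm
  · intro h
    refine ⟨f i₀, fun i => ?_⟩
    by_cases hi : i = i₀
    · rw [hi]
    · exact h i hi

end Int

theorem Matrix.mulVec_ite_apply {R ι : Type*} [CommRing R] [Fintype ι] [DecidableEq ι]
    (c d : R) (x : ι → R) (i : ι) :
    (Matrix.of fun i j => if i = j then c else d).mulVec x i = (c - d) * x i + d * ∑ j, x j := by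
  have hsplit : ∀ j,
      (if i = j then c else d) * x j = d * x j + if i = j then (c - d) * x j else 0 := by
    intro j; split_ifs <;> ring
  simp only [Matrix.mulVec, dotProduct, Matrix.of_apply, hsplit, Finset.sum_add_distrib,
    Finset.sum_ite_eq, Finset.mem_univ, if_true, ← Finset.mul_sum]
  ring

theorem stmt_1 (n r : ℕ) (hn : 0 < n) (hr : 0 < r) (c d : ℤ)
    (B : Matrix (Fin r) (Fin r) ℤ)
    (hB : ∀ i j, B i j = if i = j then c else d)
    (x : Fin r → ℤ) :
    (∃ a : ℤ, ∀ i, B.mulVec x i ≡ a [ZMOD (n : ℤ)]) ↔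
      (∀ j : Fin r, j ≠ ⟨0, hr⟩ →
        ∃ v : ℤ, x j ≡ x ⟨0, hr⟩ + v * ((n : ℤ) / (Int.gcd (c - d) n : ℤ)) [ZMOD (n : ℤ)]) := by
  have hBx : ∀ i, B.mulVec x i = (c - d) * x i + d * ∑ j, x j := by
    rw [show B = Matrix.of fun i j => if i = j then c else d from Matrix.ext hB]
    exact Matrix.mulVec_ite_apply c d x
  have hdiv : (n : ℤ) / (Int.gcd (c - d) n : ℤ) ∣ n :=
    Int.ediv_dvd_of_dvd (Int.gcd_dvd_right _ _)
  rw [Int.exists_forall_modEq_iff _ ⟨0, hr⟩]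
  refine forall₂_congr fun j _ => ?_
  rw [Int.exists_modEq_add_mul_iff hdiv, hBx, hBx, Int.gcd_comm,
    ← Int.mul_modEq_mul_left_iff (by exact_mod_cast hn)]
  exact ⟨Int.ModEq.add_right_cancel' _, (·.add_right _)⟩
end

section
/- Let n, r be positive integers, c, d integers, and B the r×r matrix with diagonal entries c and off-diagonal entries d. Let 𝒹₁ = gcd(c−d, n). Then the number of vectors x ∈ (ℤ/nℤ)^r for which there exists a ∈ ℤ/nℤ with B·x = a·(1,...,1)^T in (ℤ/nℤ)^r equals n · 𝒹₁^{r−1}. -/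
/-!
Since `B = (c - d) • 1 + d • J` with `J` the all-ones matrix, `B *ᵥ x` and `(c - d) • x` differ by
a constant vector, so `B *ᵥ x` is constant iff `(c - d) * (x i - x i₀) = 0` for all `i`. Such an `x`
is given by a free coordinate `x i₀` and `r - 1` differences in the kernel of multiplication by
`c - d` on the cyclic group `ZMod n`, which has `gcd (c - d) n` elements.
-/

open Matrix

namespace AddMonoidHom

variable {ι M N : Type*} [DecidableEq ι] [AddCommGroup M] [AddCommGroup N]

def equivProdPiKer (f : M →+ N) (i₀ : ι) :
    {x : ι → M // ∀ i, f (x i) = f (x i₀)} ≃ M × ({i // i ≠ i₀} → f.ker) where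
  toFun x := (x.1 i₀, fun i => ⟨x.1 i - x.1 i₀, by simp [x.2 i]⟩)
  invFun p := ⟨fun i => if h : i = i₀ then p.1 else p.1 + p.2 ⟨i, h⟩, fun i => by
    dsimp only
    rw [dif_pos rfl]
    split_ifs with h
    · rfl
    · simp [f.mem_ker.mp (p.2 ⟨i, h⟩).2]⟩
  left_inv x := by ext i; by_cases h : i = i₀ <;> simp [h]
  right_inv p := Prod.ext (by simp) (funext fun i => Subtype.ext (by simp [i.2]))

theorem card_apply_eq_apply [Fintype ι] (f : M →+ N) (i₀ : ι) :
    Nat.card {x : ι → M // ∀ i, f (x i) = f (x i₀)} =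
      Nat.card M * Nat.card f.ker ^ (Fintype.card ι - 1) := by
  rw [Nat.card_congr (f.equivProdPiKer i₀), Nat.card_prod, Nat.card_fun,
    Nat.card_eq_fintype_card (α := {i // i ≠ i₀}), Fintype.card_subtype_compl,
    Fintype.card_subtype_eq]

end AddMonoidHom

theorem ZMod.card_ker_mulLeft_intCast (n : ℕ) [NeZero n] (e : ℤ) :
    Nat.card (AddMonoidHom.mulLeft (e : ZMod n)).ker = e.gcd n := by
  have : (AddMonoidHom.mulLeft (e : ZMod n)).ker = (nsmulAddMonoidHom e.natAbs).ker := by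
    ext y
    rcases Int.natAbs_eq e with h | h <;>
      · rw [h]; simp [nsmul_eq_mul]
  rw [this, IsAddCyclic.card_nsmulAddMonoidHom_ker, Nat.card_zmod, Nat.gcd_comm]
  rfl

section
variable {ι R : Type*} [Fintype ι] [DecidableEq ι] [CommRing R]

theorem Matrix.mulVec_apply_of_eq_ite {B : Matrix ι ι R} {c d : R}
    (hB : ∀ i j, B i j = if i = j then c else d) (x : ι → R) (i : ι) :
    (B *ᵥ x) i = (c - d) * x i + d * ∑ j, x j := by
  have : B = (c - d) • 1 + of fun _ _ => d := by
    ext i j; rw [hB]; by_cases h : i = j <;> simp [h]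
  rw [this, add_mulVec, smul_mulVec, one_mulVec]
  simp [mulVec, dotProduct, Finset.mul_sum]

theorem Matrix.exists_mulVec_eq_const_iff_of_eq_ite {B : Matrix ι ι R} {c d : R}
    (hB : ∀ i j, B i j = if i = j then c else d) (x : ι → R) (i₀ : ι) :
    (∃ a, B *ᵥ x = fun _ => a) ↔ ∀ i, (c - d) * x i = (c - d) * x i₀ := by
  simp only [funext_iff, mulVec_apply_of_eq_ite hB]
  constructor
  · rintro ⟨a, ha⟩ i
    exact add_right_cancel ((ha i).trans (ha i₀).symm)
  · intro h
    exact ⟨_, fun i => by rw [h i]⟩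

end

theorem stmt_2 (n r : ℕ) (hn : 0 < n) (hr : 0 < r) (c d : ℤ)
    (B : Matrix (Fin r) (Fin r) (ZMod n))
    (hB : ∀ i j, B i j = if i = j then (c : ZMod n) else (d : ZMod n)) :
    Nat.card {x : Fin r → ZMod n // ∃ a : ZMod n, B.mulVec x = fun _ => a}
      = n * (Int.gcd (c - d) n) ^ (r - 1) := by
  have : NeZero n := ⟨hn.ne'⟩
  let i₀ : Fin r := ⟨0, hr⟩
  simp only [exists_mulVec_eq_const_iff_of_eq_ite hB _ i₀]
  rw [← Int.cast_sub]
  refine ((AddMonoidHom.mulLeft ((c - d : ℤ) : ZMod n)).card_apply_eq_apply i₀).trans ?_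
  rw [ZMod.card_ker_mulLeft_intCast, Nat.card_zmod, Fintype.card_fin]
end

section
/- Let n, r be positive integers and c, d integers. Set 𝒹₁ = gcd(c−d, n) and 𝒹₂ = gcd(c+(r−1)d, n), and let B be the r×r matrix with diagonal entries c and off-diagonal entries d. Then the number of vectors x ∈ (ℤ/nℤ)^r satisfying B·x = 0 in (ℤ/nℤ)^r equals 𝒹₁^{r−1} · gcd(𝒹₂, d·n/𝒹₁). -/
/-!
Write `a = c - d`, so that `(B x)ᵢ = a xᵢ + d σ` with `σ = ∑ xⱼ`. The solution group `K` is
counted through the coordinate sum `σ : K → ℤ/n`: its kernel consists of the `x` with all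
`a xᵢ = 0` and `σ = 0`, which has `gcd(a, n)^(r-1)` elements, and its image consists of the `s`
with `(a + r d) s = 0` and `-d s ∈ a·ℤ/n`. In the cyclic group `ℤ/n` the image of `a·` is the
kernel of `(n / gcd(a, n))·`, so the image of `σ` is the kernel of multiplication by
`gcd(c + (r-1) d, d n / 𝒹₁)`.
-/

theorem AddSubgroup.card_eq_card_inf_ker_mul_card_map {G G' : Type*} [AddGroup G] [AddGroup G']
    (K : AddSubgroup G) (f : G →+ G') :
    Nat.card K = Nat.card ↥(K ⊓ f.ker) * Nat.card ↥(K.map f) := by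
  rw [← relIndex_bot_left, ← relIndex_mul_relIndex ⊥ (K ⊓ f.ker) K bot_le inf_le_left,
    relIndex_bot_left, inf_comm, inf_relIndex_right, relIndex_ker]

theorem zsmul_eq_zero_and_zsmul_eq_zero_iff {G : Type*} [AddGroup G] (e w : ℤ) (x : G) :
    e • x = 0 ∧ w • x = 0 ↔ (e.gcd w : ℤ) • x = 0 := by
  simp only [← addOrderOf_dvd_iff_zsmul_eq_zero, Int.dvd_coe_gcd_iff]

theorem exists_zsmul_eq_iff_exists_natAbs_nsmul_eq {G : Type*} [AddGroup G] (a : ℤ) (t : G) :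
    (∃ y, a • y = t) ↔ ∃ y, a.natAbs • y = t := by
  obtain ⟨k, rfl | rfl⟩ := Int.eq_nat_or_neg a
  · simp only [natCast_zsmul, Int.natAbs_natCast]
  · simp only [Int.natAbs_neg, Int.natAbs_natCast]
    constructor <;> rintro ⟨y, rfl⟩ <;> exact ⟨-y, by simp⟩

namespace IsAddCyclic

variable {G : Type*} [AddCommGroup G] [IsAddCyclic G] [Finite G]

theorem card_ker_zsmulAddGroupHom (m : ℤ) :
    Nat.card (zsmulAddGroupHom m : G →+ G).ker = m.gcd (Nat.card G) := by
  have hker : (zsmulAddGroupHom m : G →+ G).ker = (nsmulAddMonoidHom m.natAbs).ker := by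
    ext; simp
  rw [hker, card_nsmulAddMonoidHom_ker, Int.gcd_comm]
  rfl

theorem range_nsmulAddMonoidHom (k : ℕ) :
    (nsmulAddMonoidHom k : G →+ G).range =
      (nsmulAddMonoidHom (Nat.card G / (Nat.card G).gcd k)).ker := by
  set N := Nat.card G
  set g := N.gcd k
  obtain ⟨N', hN'⟩ : g ∣ N := Nat.gcd_dvd_left N k
  obtain ⟨k', hk'⟩ : g ∣ k := Nat.gcd_dvd_right N k
  have hquot : N / g = N' := by
    rw [hN', Nat.mul_div_cancel_left _ (Nat.gcd_pos_of_pos_left k Nat.card_pos)]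
  -- both subgroups have `N / g` elements
  apply AddSubgroup.eq_of_le_of_card_ge
  · rintro _ ⟨y, rfl⟩
    have hcomm : N' * k = k' * N := by rw [hk', hN']; ring
    rw [AddMonoidHom.mem_ker, nsmulAddMonoidHom_apply, nsmulAddMonoidHom_apply, hquot, smul_smul,
      hcomm, mul_smul, card_nsmul_eq_zero', smul_zero]
  · rw [card_nsmulAddMonoidHom_ker, card_nsmulAddMonoidHom_range,
      Nat.gcd_eq_right (Nat.div_dvd_of_dvd (Nat.gcd_dvd_left N k))]

theorem exists_zsmul_eq_iff (a : ℤ) (t : G) :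
    (∃ y, a • y = t) ↔ (Nat.card G / a.gcd (Nat.card G)) • t = 0 := by
  rw [exists_zsmul_eq_iff_exists_natAbs_nsmul_eq, Int.gcd_comm]
  change t ∈ (nsmulAddMonoidHom a.natAbs : G →+ G).range ↔ _
  rw [range_nsmulAddMonoidHom]
  rfl

theorem card_zsmul_eq_zero_and_exists_zsmul_eq_neg (E a d : ℤ) :
    Nat.card {s : G // E • s = 0 ∧ ∃ y, a • y = -(d • s)} =
      (E.gcd (Nat.card G) : ℤ).gcd (d * Nat.card G / a.gcd (Nat.card G)) := by
  set N := Nat.card G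
  have hw : d * N / a.gcd N = ((N / a.gcd N : ℕ) : ℤ) * d := by
    rw [Int.mul_ediv_assoc d (Int.gcd_dvd_right a N), Int.natCast_div, mul_comm]
  have hcond : ∀ s : G, (E • s = 0 ∧ ∃ y, a • y = -(d • s)) ↔
      s ∈ (zsmulAddGroupHom (E.gcd (d * N / a.gcd N) : ℤ)).ker := by
    intro s
    rw [exists_zsmul_eq_iff, smul_neg, neg_eq_zero, ← natCast_zsmul, smul_smul, ← hw,
      zsmul_eq_zero_and_zsmul_eq_zero_iff, AddMonoidHom.mem_ker, zsmulAddGroupHom_apply]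
  rw [Nat.card_congr (Equiv.subtypeEquivRight hcond), card_ker_zsmulAddGroupHom]
  show Nat.gcd _ _ = Nat.gcd _ _
  simp only [Int.natAbs_natCast]
  exact Nat.gcd_right_comm _ _ _

end IsAddCyclic

section

variable {ι M : Type*} [Fintype ι] [AddCommGroup M]

@[simps]
def coordSum : (ι → M) →+ M where
  toFun x := ∑ i, x i
  map_zero' := Finset.sum_const_zero
  map_add' _ _ := Finset.sum_add_distrib

@[simps]
def smulAddSmulSum (a d : ℤ) : (ι → M) →+ (ι → M) where
  toFun x i := a • x i + d • ∑ j, x j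
  map_zero' := by ext; simp
  map_add' x y := by ext; simp only [Pi.add_apply, Finset.sum_add_distrib, smul_add]; abel

theorem card_pi_inf_ker_coordSum [Nonempty ι] [Finite M] (H : AddSubgroup M) :
    Nat.card ↥(AddSubgroup.pi Set.univ (fun _ : ι => H) ⊓ coordSum.ker) =
      Nat.card H ^ (Fintype.card ι - 1) := by
  have hcard_pi :
      Nat.card (AddSubgroup.pi Set.univ (fun _ : ι => H)) = Nat.card H ^ Fintype.card ι := by
    rw [Nat.card_congr ((Equiv.subtypeEquivRight fun x => by simp [AddSubgroup.mem_pi]).trans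
      (Equiv.subtypePiEquivPi (p := fun _ y => y ∈ H))), Nat.card_pi, Finset.prod_const,
      Finset.card_univ]
  have hmap : (AddSubgroup.pi Set.univ (fun _ : ι => H)).map coordSum = H := by
    ext s
    constructor
    · rintro ⟨x, hx, rfl⟩
      exact H.sum_mem fun i _ => hx i (Set.mem_univ i)
    · intro hs
      obtain ⟨i₀⟩ := ‹Nonempty ι›
      classical
      refine ⟨Pi.single i₀ s, fun i _ => ?_, by simp⟩
      rcases eq_or_ne i i₀ with rfl | hi
      · simpa using hs
      · simp [hi]
  have hcard :=
    (AddSubgroup.pi Set.univ (fun _ : ι => H)).card_eq_card_inf_ker_mul_card_map coordSum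
  rw [hcard_pi, hmap, ← Nat.sub_add_cancel Fintype.card_pos, pow_succ] at hcard
  exact (Nat.eq_of_mul_eq_mul_right Nat.card_pos hcard).symm

theorem ker_smulAddSmulSum_inf_ker_coordSum (a d : ℤ) :
    (smulAddSmulSum a d : (ι → M) →+ _).ker ⊓ coordSum.ker =
      AddSubgroup.pi Set.univ (fun _ => (zsmulAddGroupHom a).ker) ⊓ coordSum.ker := by
  ext x
  simp only [AddSubgroup.mem_inf, AddMonoidHom.mem_ker, AddSubgroup.mem_pi, funext_iff,
    smulAddSmulSum_apply, coordSum_apply, zsmulAddGroupHom_apply, Pi.zero_apply, Set.mem_univ,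
    true_implies]
  constructor <;> rintro ⟨hx, hsum⟩ <;> simpa [hsum] using hx

theorem mem_map_coordSum_ker_smulAddSmulSum [Nonempty ι] (a d : ℤ) (s : M) :
    s ∈ (smulAddSmulSum a d : (ι → M) →+ _).ker.map coordSum ↔
      (a + Fintype.card ι * d) • s = 0 ∧ ∃ y, a • y = -(d • s) := by
  obtain ⟨i₀⟩ := ‹Nonempty ι›
  constructor
  · rintro ⟨x, hx, rfl⟩
    have hx' : ∀ i, a • x i + d • ∑ j, x j = 0 := fun i => congrFun hx i
    refine ⟨?_, x i₀, eq_neg_of_add_eq_zero_left (hx' i₀)⟩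
    calc (a + Fintype.card ι * d) • ∑ j, x j = ∑ i, (a • x i + d • ∑ j, x j) := by
          rw [Finset.sum_add_distrib, ← Finset.smul_sum, Finset.sum_const, Finset.card_univ,
            add_smul, mul_smul, natCast_zsmul]
      _ = 0 := Finset.sum_eq_zero fun i _ => hx' i
  · rintro ⟨hs, y, hy⟩
    classical
    -- the solution `y + u eᵢ₀`, with `u` chosen so that the coordinates sum to `s`
    set u := s - Fintype.card ι • y
    have hu : a • u = 0 := by
      calc a • u = (a + Fintype.card ι * d) • s - Fintype.card ι • (a • y + d • s) := by
            rw [smul_sub, add_smul, mul_smul, natCast_zsmul, smul_add, smul_comm a]; abel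
        _ = 0 := by rw [hs, hy, neg_add_cancel, smul_zero, sub_zero]
    have hsum : ∑ i, (y + (Pi.single i₀ u : ι → M) i) = s := by
      simp [Finset.sum_add_distrib, u]
    refine ⟨fun i => y + (Pi.single i₀ u : ι → M) i, funext fun i => ?_, hsum⟩
    rw [smulAddSmulSum_apply, hsum, smul_add, hy]
    rcases eq_or_ne i i₀ with rfl | hi
    · simp [hu]
    · simp [hi]

theorem Matrix.of_ite_mulVec {R : Type*} [CommRing R] [DecidableEq ι] (c d : ℤ) (x : ι → R) :
    (Matrix.of fun i j => if i = j then (c : R) else d).mulVec x = smulAddSmulSum (c - d) d x := by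
  ext i
  have hsplit : ∀ j, (if i = j then (c : R) else d) * x j =
      (if i = j then (c - d : R) * x j else 0) + d * x j := by
    intro j; split_ifs <;> ring
  simp only [Matrix.mulVec, dotProduct, Matrix.of_apply, hsplit, Finset.sum_add_distrib,
    Finset.sum_ite_eq, Finset.mem_univ, if_true, ← Finset.mul_sum, zsmul_eq_mul, Int.cast_sub,
    smulAddSmulSum_apply]

end

theorem stmt_6 (n r : ℕ) (hn : 0 < n) (hr : 0 < r) (c d : ℤ)
    (B : Matrix (Fin r) (Fin r) (ZMod n))
    (hB : ∀ i j, B i j = if i = j then (c : ZMod n) else (d : ZMod n)) :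
    Nat.card {x : Fin r → ZMod n // B.mulVec x = 0}
      = (Int.gcd (c - d) n) ^ (r - 1) *
        Int.gcd ((Int.gcd (c + (r - 1) * d) n : ℤ)) (d * n / (Int.gcd (c - d) n : ℤ)) := by
  have : NeZero n := ⟨hn.ne'⟩
  have : Nonempty (Fin r) := ⟨⟨0, hr⟩⟩
  have hB' : B = Matrix.of fun i j => if i = j then (c : ZMod n) else d := Matrix.ext hB
  have hE : c - d + (r : ℤ) * d = c + (r - 1) * d := by ring
  let K := (smulAddSmulSum (c - d) d : (Fin r → ZMod n) →+ _).ker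
  have hsolutions : Nat.card {x // B.mulVec x = 0} = Nat.card K :=
    Nat.card_congr (Equiv.subtypeEquivRight fun x => by rw [hB', Matrix.of_ite_mulVec]; rfl)
  have himage : Nat.card (K.map coordSum) =
      Nat.card {s : ZMod n // (c + (r - 1) * d) • s = 0 ∧ ∃ y, (c - d) • y = -(d • s)} :=
    Nat.card_congr (Equiv.subtypeEquivRight fun s => by
      rw [mem_map_coordSum_ker_smulAddSmulSum, Fintype.card_fin, hE])
  have hker := IsAddCyclic.card_ker_zsmulAddGroupHom (G := ZMod n) (c - d)
  have hcard_image := IsAddCyclic.card_zsmul_eq_zero_and_exists_zsmul_eq_neg (G := ZMod n)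
    (c + (r - 1) * d) (c - d) d
  rw [Nat.card_zmod] at hker hcard_image
  rw [hsolutions, K.card_eq_card_inf_ker_mul_card_map coordSum,
    ker_smulAddSmulSum_inf_ker_coordSum, card_pi_inf_ker_coordSum, himage, Fintype.card_fin,
    hker, hcard_image]
end

section
/- Let n, r be positive integers and c, d integers. Set 𝒹₁ = gcd(c−d, n) and 𝒹₂ = gcd(c+(r−1)d, n). Then the number of vectors x = (x₁,...,x_r) ∈ (ℤ/nℤ)^r satisfying (c−d)(x_i − x_r) ≡ 0 (mod n) for all 1 ≤ i ≤ r−1 and (c+(r−1)d)(x₁ + x₂ + ⋯ + x_r) ≡ 0 (mod n) equals 𝒹₁^{r−1} · 𝒹₂ · gcd(n/𝒹₁, n/𝒹₂, r). -/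
/-!
With `a = c - d`, `b = c + (r - 1) d`, substitute `y i = x i - x (r - 1)` for `i < r - 1` and
`t = x (r - 1)`. The solutions become the kernel of `(y, t) ↦ b (∑ y + r t)` on
`K ^ (r - 1) × ℤ/n`, where `K = {z | a z = 0}` is cyclic of order `gcd(a, n)`, generated by
`n / gcd(a, n)`. The image of this map is `b · (K + rℤ/n)`, the subgroup generated by `b h` with
`h = gcd(n / gcd(a, n), r)`; it has order `n / gcd(b h, n)`, and
`gcd(b h, n) = gcd(b, n) · gcd(h, n / gcd(b, n))`.
-/

open AddSubgroup

theorem Nat.gcd_mul_eq_gcd_mul_gcd_div (b h n : ℕ) :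
    Nat.gcd (b * h) n = Nat.gcd b n * Nat.gcd h (n / Nat.gcd b n) := by
  rcases Nat.eq_zero_or_pos (Nat.gcd b n) with hg | hg
  · simp [(Nat.gcd_eq_zero_iff.mp hg).1, (Nat.gcd_eq_zero_iff.mp hg).2]
  obtain ⟨b', n', hcop, hb, hn⟩ := Nat.exists_coprime b n
  set g := Nat.gcd b n
  calc Nat.gcd (b * h) n = g * Nat.gcd (b' * h) n' := by
        rw [hb, hn, mul_right_comm, Nat.gcd_mul_right, mul_comm]
    _ = g * Nat.gcd h (n / g) := by
        rw [hcop.gcd_mul_left_cancel, hn, Nat.mul_div_cancel _ hg]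

theorem Nat.eq_mul_of_mul_div_eq_mul {g n x y : ℕ} (hn : n ≠ 0) (hg : g ∣ n)
    (h : x * (n / g) = y * n) : x = y * g := by
  have hpos : 0 < n / g := Nat.div_pos (Nat.le_of_dvd (Nat.pos_of_ne_zero hn) hg)
    (Nat.pos_of_ne_zero (ne_zero_of_dvd_ne_zero hn hg))
  refine Nat.eq_of_mul_eq_mul_right hpos (h.trans ?_)
  rw [mul_assoc, Nat.mul_div_cancel' hg]

theorem AddSubgroup.zmultiples_natCast_sup {R : Type*} [AddGroupWithOne R] (a b : ℕ) :
    zmultiples (a : R) ⊔ zmultiples (b : R) = zmultiples ((Nat.gcd a b : ℕ) : R) := by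
  have h := congrArg (map (Int.castAddHom R)) (Int.zmultiples_sup a b)
  simpa only [map_sup, AddMonoidHom.map_zmultiples, Int.coe_castAddHom, Int.cast_natCast,
    Int.gcd_natCast_natCast] using h

namespace ZMod

theorem range_mulLeft {n : ℕ} (x : ZMod n) : (AddMonoidHom.mulLeft x).range = zmultiples x := by
  ext y
  constructor
  · rintro ⟨z, rfl⟩
    obtain ⟨k, rfl⟩ := intCast_surjective z
    exact ⟨k, by simp [zsmul_eq_mul, mul_comm]⟩
  · rintro ⟨k, rfl⟩
    exact ⟨k, by simp [zsmul_eq_mul, mul_comm]⟩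

variable {n : ℕ} [NeZero n]

theorem card_zmultiples_intCast (k : ℤ) :
    Nat.card (zmultiples (k : ZMod n)) = n / Int.gcd k n := by
  have hk : zmultiples (k : ZMod n) = zmultiples ((k.natAbs : ℕ) : ZMod n) := by
    rcases Int.natAbs_eq k with h | h <;> rw [h] <;> simp
  rw [hk, Nat.card_zmultiples, addOrderOf_coe _ (NeZero.ne n), Nat.gcd_comm]
  rfl

theorem card_ker_mulLeft_intCast_s7 (a : ℤ) :
    Nat.card (AddMonoidHom.mulLeft (a : ZMod n)).ker = Int.gcd a n := by
  have h := (AddMonoidHom.mulLeft (a : ZMod n)).ker.card_mul_index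
  rw [index_ker, range_mulLeft, card_zmultiples_intCast, Nat.card_zmod] at h
  simpa using Nat.eq_mul_of_mul_div_eq_mul (NeZero.ne n) (Int.gcd_dvd_natAbs_right a n)
    (h.trans (one_mul n).symm)

theorem ker_mulLeft_intCast (a : ℤ) :
    (AddMonoidHom.mulLeft (a : ZMod n)).ker = zmultiples ((n / Int.gcd a n : ℕ) : ZMod n) := by
  set g := Int.gcd a n
  have hdvd : g ∣ n := Int.gcd_dvd_natAbs_right a n
  symm
  apply eq_of_le_of_card_ge
  · rw [zmultiples_le, AddMonoidHom.mem_ker, AddMonoidHom.coe_mulLeft]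
    obtain ⟨a', ha⟩ : (g : ℤ) ∣ a := Int.gcd_dvd_left _ _
    rw [ha, Int.cast_mul, Int.cast_natCast, mul_comm (g : ZMod n), mul_assoc, ← Nat.cast_mul,
      Nat.mul_div_cancel' hdvd, natCast_self, mul_zero]
  · rw [card_ker_mulLeft_intCast_s7, Nat.card_zmultiples, addOrderOf_coe _ (NeZero.ne n),
      Nat.gcd_eq_right (Nat.div_dvd_of_dvd hdvd), Nat.div_div_self hdvd (NeZero.ne n)]

end ZMod

section Shear

variable {R : Type*} [CommRing R]

/-- The coordinate sum of `Fin.snoc (y + t) t`. -/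
def shiftedSum (K : AddSubgroup R) (m : ℕ) : (Fin m → K) × R →+ R :=
  AddMonoidHom.mk' (fun p => ∑ i, (p.1 i : R) + (m + 1) * p.2) fun p q => by
    simp only [Prod.fst_add, Prod.snd_add, Pi.add_apply, coe_add, Finset.sum_add_distrib]
    ring

theorem shiftedSum_apply (K : AddSubgroup R) (m : ℕ) (p : (Fin m → K) × R) :
    shiftedSum K m p = ∑ i, (p.1 i : R) + (m + 1) * p.2 := rfl

theorem range_shiftedSum (K : AddSubgroup R) (m : ℕ) :
    (shiftedSum K m).range = K ⊔ (AddMonoidHom.mulLeft ((m + 1 : ℕ) : R)).range := by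
  apply le_antisymm
  · rintro _ ⟨p, rfl⟩
    rw [shiftedSum_apply]
    exact add_mem (mem_sup_left (sum_mem fun i _ => (p.1 i).2))
      (mem_sup_right ⟨p.2, by simp⟩)
  · refine sup_le ?_ ?_
    · intro k hk
      cases m with
      | zero => exact ⟨(0, k), by simp [shiftedSum_apply]⟩
      | succ m =>
        exact ⟨(Pi.single 0 ⟨k, hk⟩, 0),
          by simp [shiftedSum_apply, Pi.single_apply, apply_ite Subtype.val]⟩
    · rintro _ ⟨t, rfl⟩
      exact ⟨(0, t), by simp [shiftedSum_apply]⟩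

def solutionsEquivKer (a b : R) (m : ℕ) :
    {x : Fin (m + 1) → R //
      (∀ i, i ≠ Fin.last m → a * (x i - x (Fin.last m)) = 0) ∧ b * ∑ i, x i = 0} ≃
    ((AddMonoidHom.mulLeft b).comp (shiftedSum (AddMonoidHom.mulLeft a).ker m)).ker where
  toFun x := ⟨(fun i => ⟨x.1 i.castSucc - x.1 (Fin.last m), x.2.1 _ (Fin.castSucc_ne_last i)⟩,
      x.1 (Fin.last m)), by
    have hsum := x.2.2
    simp only [Fin.sum_univ_castSucc] at hsum
    simp only [AddMonoidHom.mem_ker, AddMonoidHom.comp_apply, shiftedSum_apply,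
      AddMonoidHom.coe_mulLeft, Finset.sum_sub_distrib, Finset.sum_const, Finset.card_univ,
      Fintype.card_fin, nsmul_eq_mul]
    linear_combination hsum⟩
  invFun p := ⟨Fin.snoc (fun i => (p.1.1 i : R) + p.1.2) p.1.2, by
    refine ⟨fun i hi => ?_, ?_⟩
    · obtain ⟨j, rfl⟩ := Fin.exists_castSucc_eq.mpr hi
      simpa only [Fin.snoc_castSucc, Fin.snoc_last, add_sub_cancel_right,
        AddMonoidHom.coe_mulLeft] using AddMonoidHom.mem_ker.mp (p.1.1 j).2
    · have hp := p.2
      simp only [AddMonoidHom.mem_ker, AddMonoidHom.comp_apply, shiftedSum_apply,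
        AddMonoidHom.coe_mulLeft] at hp
      simp only [Fin.sum_univ_castSucc, Fin.snoc_castSucc, Fin.snoc_last, Finset.sum_add_distrib,
        Finset.sum_const, Finset.card_univ, Fintype.card_fin, nsmul_eq_mul]
      linear_combination hp⟩
  left_inv x := by
    ext i
    induction i using Fin.lastCases <;> simp
  right_inv p := by
    ext i <;> simp

end Shear

theorem ZMod.card_solutions {n : ℕ} [NeZero n] (a b : ℤ) (m : ℕ) :
    Nat.card {x : Fin (m + 1) → ZMod n //
      (∀ i, i ≠ Fin.last m → (a : ZMod n) * (x i - x (Fin.last m)) = 0) ∧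
        (b : ZMod n) * ∑ i, x i = 0} =
      Int.gcd a n ^ m * Int.gcd b n *
        Nat.gcd (Nat.gcd (n / Int.gcd a n) (n / Int.gcd b n)) (m + 1) := by
  set ψ := (AddMonoidHom.mulLeft (b : ZMod n)).comp
    (shiftedSum (AddMonoidHom.mulLeft (a : ZMod n)).ker m)
  set h := Nat.gcd (n / Int.gcd a n) (m + 1)
  have hrange : ψ.range = zmultiples ((b * h : ℤ) : ZMod n) := by
    rw [AddMonoidHom.range_comp, range_shiftedSum, ZMod.ker_mulLeft_intCast, ZMod.range_mulLeft,
      zmultiples_natCast_sup, AddMonoidHom.map_zmultiples]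
    simp [h]
  have hgcd : Int.gcd (b * h) n = Int.gcd b n * Nat.gcd h (n / Int.gcd b n) := by
    simpa [Int.gcd, Int.natAbs_mul] using Nat.gcd_mul_eq_gcd_mul_gcd_div b.natAbs h n
  have hcard := ψ.ker.card_mul_index
  rw [index_ker, hrange, ZMod.card_zmultiples_intCast, Nat.card_prod, Nat.card_fun,
    Nat.card_zmod, ZMod.card_ker_mulLeft_intCast_s7, Nat.card_fin] at hcard
  rw [Nat.card_congr (solutionsEquivKer _ _ m), mul_assoc, Nat.gcd_right_comm, ← hgcd]
  exact Nat.eq_mul_of_mul_div_eq_mul (NeZero.ne n) (Int.gcd_dvd_natAbs_right _ n) hcard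

theorem stmt_7 (n r : ℕ) (hn : 0 < n) (hr : 0 < r) (c d : ℤ) :
    Nat.card {x : Fin r → ZMod n //
      (∀ i : Fin r, i ≠ ⟨r - 1, by omega⟩ →
        ((c - d : ℤ) : ZMod n) * (x i - x ⟨r - 1, by omega⟩) = 0) ∧
      ((c + (r - 1) * d : ℤ) : ZMod n) * (∑ i, x i) = 0}
    = (Int.gcd (c - d) n) ^ (r - 1) * Int.gcd (c + (r - 1) * d) n *
      Nat.gcd (Nat.gcd (n / Int.gcd (c - d) n) (n / Int.gcd (c + (r - 1) * d) n)) r := by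
  have : NeZero n := ⟨hn.ne'⟩
  obtain ⟨m, rfl⟩ : ∃ m, r = m + 1 := ⟨r - 1, by omega⟩
  simp only [Nat.cast_add, Nat.cast_one, add_sub_cancel_right]
  exact ZMod.card_solutions (c - d) (c + m * d) m
end

section
/- Let n, r be positive integers and c, d integers, with 𝒹₁ = gcd(c−d, n) and 𝒹₂ = gcd(c+(r−1)d, n). Then 𝒹₁^{r−1} · gcd(𝒹₂, d·n/𝒹₁) = (𝒹₁^{r−1}·𝒹₂/n) · gcd(n/𝒹₁, n/𝒹₂, r) · lcm(n/gcd(r,n), gcd(𝒹₂, d·n/𝒹₁)). -/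
/-!
Put `x = c - d` and `y = c + (r - 1) d = x + r d`. Since `x + r d = y`, the `p`-adic valuations of
`gcd(x, n)`, `gcd(y, n)` and `gcd(r d, n)` satisfy the ultrametric condition: the smallest two of
them agree. All gcds in the statement are taken against divisors of `n`, so `d` may be replaced
by the nonzero `gcd(|d|, n)`; the identity then becomes one between natural numbers, which is
checked prime by prime as an identity of `min`/`max` expressions under the ultrametric condition.
-/

theorem Nat.gcd_mul_gcd_of_dvd {k n : ℕ} (a e : ℕ) (hk : k ∣ n) :
    k.gcd (a * e.gcd n) = k.gcd (a * e) := by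
  rw [← Nat.gcd_mul_left, ← Nat.gcd_assoc,
    Nat.gcd_eq_left ((Nat.gcd_dvd_left _ _).trans (hk.trans (Nat.dvd_mul_left n a)))]

theorem Int.gcd_gcd_dvd_gcd_of_add_eq {x z y : ℤ} (n : ℤ) (h : x + z = y) :
    (x.gcd n).gcd (z.gcd n) ∣ y.gcd n := by
  have hx : ((x.gcd n).gcd (z.gcd n) : ℤ) ∣ x :=
    (Int.natCast_dvd_natCast.mpr (Nat.gcd_dvd_left _ _)).trans (Int.gcd_dvd_left _ _)
  have hz : ((x.gcd n).gcd (z.gcd n) : ℤ) ∣ z :=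
    (Int.natCast_dvd_natCast.mpr (Nat.gcd_dvd_right _ _)).trans (Int.gcd_dvd_left _ _)
  have hn : ((x.gcd n).gcd (z.gcd n) : ℤ) ∣ n :=
    (Int.natCast_dvd_natCast.mpr (Nat.gcd_dvd_left _ _)).trans (Int.gcd_dvd_right _ _)
  exact Int.natCast_dvd_natCast.mp (Int.dvd_coe_gcd (h ▸ dvd_add hx hz) hn)

/-- `s`, `t` and `gcd(r e, n)` play the roles of `gcd(x, n)`, `gcd(y, n)` and `gcd(r d, n)` for
`x + r d = y`; the three divisibilities are the ultrametric condition on their valuations. -/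
theorem count_identity_of_ultrametric {n r e s t : ℕ} (hn : n ≠ 0) (hr : r ≠ 0) (he : e ≠ 0)
    (hs : s ∣ n) (ht : t ∣ n) (hst : s.gcd t ∣ (r * e).gcd n)
    (hsq : s.gcd ((r * e).gcd n) ∣ t) (htq : t.gcd ((r * e).gcd n) ∣ s) :
    n * t.gcd (n / s * e) =
      t * (((n / s).gcd (n / t)).gcd r * (n / r.gcd n).lcm (t.gcd (n / s * e))) := by
  have hs0 : s ≠ 0 := ne_zero_of_dvd_ne_zero hn hs
  have ht0 : t ≠ 0 := ne_zero_of_dvd_ne_zero hn ht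
  have hns : n / s ≠ 0 := (Nat.div_ne_zero_iff_of_dvd hs).mpr ⟨hn, hs0⟩
  have hnt : n / t ≠ 0 := (Nat.div_ne_zero_iff_of_dvd ht).mpr ⟨hn, ht0⟩
  have hrn : n / r.gcd n ≠ 0 :=
    (Nat.div_ne_zero_iff_of_dvd (Nat.gcd_dvd_right r n)).mpr ⟨hn, Nat.gcd_ne_zero_right hn⟩
  have hq : (r * e).gcd n ≠ 0 := Nat.gcd_ne_zero_right hn
  rw [← Nat.factorization_le_iff_dvd (Nat.gcd_ne_zero_left hs0) hq] at hst
  rw [← Nat.factorization_le_iff_dvd (Nat.gcd_ne_zero_left hs0) ht0] at hsq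
  rw [← Nat.factorization_le_iff_dvd (Nat.gcd_ne_zero_left ht0) hs0] at htq
  refine Nat.eq_of_factorization_eq (by positivity) (by positivity) fun p => ?_
  have h1 := hst p
  have h2 := hsq p
  have h3 := htq p
  have h4 := (Nat.factorization_le_iff_dvd hs0 hn).mpr hs p
  have h5 := (Nat.factorization_le_iff_dvd ht0 hn).mpr ht p
  simp [Nat.factorization_mul, Nat.factorization_gcd, Nat.factorization_lcm, Nat.factorization_div,
    Nat.gcd_dvd_right, hs, ht, hn, hr, he, hs0, ht0, hns, hnt, hrn, hq] at h1 h2 h3 ⊢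
  omega

theorem stmt_8 (n r : ℕ) (hn : 0 < n) (hr : 0 < r) (c d : ℤ) :
    ((Int.gcd (c - d) n : ℚ)) ^ (r - 1) *
      ((Int.gcd ((Int.gcd (c + (r - 1) * d) n : ℤ))
        (d * n / (Int.gcd (c - d) n : ℤ)) : ℕ) : ℚ)
    = ((Int.gcd (c - d) n : ℚ)) ^ (r - 1) * (Int.gcd (c + (r - 1) * d) n : ℚ) / (n : ℚ) *
      ((Nat.gcd (Nat.gcd (n / Int.gcd (c - d) n) (n / Int.gcd (c + (r - 1) * d) n)) r : ℕ) : ℚ) *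
      ((Nat.lcm (n / Nat.gcd r n)
        (Int.gcd ((Int.gcd (c + (r - 1) * d) n : ℤ))
          (d * n / (Int.gcd (c - d) n : ℤ))) : ℕ) : ℚ) := by
  set s := Int.gcd (c - d) n
  set t := Int.gcd (c + (r - 1) * d) n
  set e := d.natAbs.gcd n
  have hs : s ∣ n := Int.natCast_dvd_natCast.mp (Int.gcd_dvd_right _ _)
  have ht : t ∣ n := Int.natCast_dvd_natCast.mp (Int.gcd_dvd_right _ _)
  have hq : Int.gcd (r * d) n = (r * e).gcd n := by
    rw [Int.gcd_eq_natAbs, Int.natAbs_mul, Int.natAbs_natCast, Int.natAbs_natCast, Nat.gcd_comm,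
      ← Nat.gcd_mul_gcd_of_dvd _ _ dvd_rfl, Nat.gcd_comm]
  have hg : Int.gcd (t : ℤ) (d * n / s) = t.gcd (n / s * e) := by
    rw [Int.mul_ediv_assoc _ (Int.natCast_dvd_natCast.mpr hs), ← Int.natCast_div, Int.gcd_eq_natAbs,
      Int.natAbs_mul, Int.natAbs_natCast, Int.natAbs_natCast, mul_comm, Nat.gcd_mul_gcd_of_dvd _ _ ht]
  have hsq := Int.gcd_gcd_dvd_gcd_of_add_eq n (show c - d + r * d = c + (r - 1) * d by ring)
  have htq := Int.gcd_gcd_dvd_gcd_of_add_eq n (show c + (r - 1) * d + -(r * d) = c - d by ring)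
  have hst := Int.gcd_gcd_dvd_gcd_of_add_eq n (show -(c - d) + (c + (r - 1) * d) = r * d by ring)
  rw [Int.neg_gcd] at htq hst
  rw [hq] at hsq htq hst
  have key := count_identity_of_ultrametric hn.ne' hr.ne' (Nat.gcd_ne_zero_right hn.ne') hs ht
    hst hsq htq
  rw [hg]
  field_simp
  norm_cast
  rw [mul_assoc, mul_comm _ n, key]
  ring
end

section
/- Let n, r be positive integers and d an integer, and let B be the r×r matrix with diagonal entries 0 and all off-diagonal entries d. Then the number of x ∈ (ℤ/nℤ)^r with B·x = 0 equals gcd(d, n)^{r−1} · gcd((r−1)·d, n). -/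
lemma kerCard (n : ℕ) (hn : 0 < n) (a : ℤ) :
    Nat.card {x : ZMod n // (a : ZMod n) * x = 0} = Int.gcd a n := by
  haveI : NeZero n := ⟨hn.ne'⟩
  set f : ZMod n →+ ZMod n := AddMonoidHom.mulLeft (a : ZMod n) with hf
  have hfapp : ∀ x, f x = (a : ZMod n) * x := fun x => rfl
  have hker : Nat.card {x : ZMod n // (a : ZMod n) * x = 0} = Nat.card f.ker := by
    apply Nat.card_congr
    exact Equiv.subtypeEquivRight (fun x => by simp [AddMonoidHom.mem_ker, hfapp])
  have hrange : f.range = AddSubgroup.zmultiples ((a : ℤ) : ZMod n) := by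
    ext y
    simp only [AddMonoidHom.mem_range, AddSubgroup.mem_zmultiples_iff, hfapp]
    constructor
    · rintro ⟨x, rfl⟩
      refine ⟨x.val, ?_⟩
      rw [zsmul_eq_mul]
      push_cast
      rw [ZMod.natCast_val, ZMod.cast_id, mul_comm]
    · rintro ⟨k, rfl⟩
      exact ⟨(k : ZMod n), by rw [zsmul_eq_mul, mul_comm]⟩
  have habs : addOrderOf ((a.natAbs : ℕ) : ZMod n) = n / Int.gcd a n := by
    rw [ZMod.addOrderOf_coe _ hn.ne', Int.gcd, Nat.gcd_comm]
    simp
  have hord : addOrderOf ((a : ℤ) : ZMod n) = n / Int.gcd a n := by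
    rcases Int.natAbs_eq a with h | h
    · rw [← habs]; conv_lhs => rw [h]
      rw [Int.cast_natCast]
    · rw [← habs, ← addOrderOf_neg]; conv_lhs => rw [h]
      rw [Int.cast_neg, Int.cast_natCast, neg_neg]
  have hcard : Nat.card (ZMod n) = Nat.card (ZMod n ⧸ f.ker) * Nat.card f.ker :=
    AddSubgroup.card_eq_card_quotient_mul_card_addSubgroup f.ker
  have hq : Nat.card (ZMod n ⧸ f.ker) = n / Int.gcd a n := by
    rw [Nat.card_congr (QuotientAddGroup.quotientKerEquivRange f).toEquiv, hrange,
      Nat.card_zmultiples, hord]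
  have hgdvd : Int.gcd a n ∣ n := by
    rw [Int.gcd]; simpa using Nat.gcd_dvd_right a.natAbs n
  have hgpos : 0 < Int.gcd a n := Nat.pos_of_dvd_of_pos hgdvd hn
  have hzn : Nat.card (ZMod n) = n := Nat.card_zmod n
  rw [hker]
  have h2 : n = (n / Int.gcd a n) * Nat.card f.ker := by rw [← hq, ← hcard, hzn]
  have h3 : (n / Int.gcd a n) * Int.gcd a n = n := Nat.div_mul_cancel hgdvd
  have hpos : 0 < n / Int.gcd a n := Nat.div_pos (Nat.le_of_dvd hn hgdvd) hgpos
  exact (Nat.eq_of_mul_eq_mul_left hpos (by rw [← h2, h3])).symm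

theorem stmt_10 (n r : ℕ) (hn : 0 < n) (hr : 0 < r) (d : ℤ)
    (B : Matrix (Fin r) (Fin r) (ZMod n))
    (hB : ∀ i j, B i j = if i = j then 0 else (d : ZMod n)) :
    Nat.card {x : Fin r → ZMod n // B.mulVec x = 0}
      = (Int.gcd d n) ^ (r - 1) * Int.gcd ((r - 1) * d) n := by
  obtain ⟨m, rfl⟩ := Nat.exists_eq_succ_of_ne_zero hr.ne'
  haveI : NeZero n := ⟨hn.ne'⟩
  set S : (Fin (m+1) → ZMod n) → ZMod n := fun x => ∑ j, x j with hS
  have hmv : ∀ (x : Fin (m+1) → ZMod n) (i : Fin (m+1)),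
      B.mulVec x i = (d : ZMod n) * S x - (d : ZMod n) * x i := by
    intro x i
    rw [Matrix.mulVec, dotProduct]
    have : ∀ j, B i j * x j = (d : ZMod n) * x j - (if i = j then (d : ZMod n) * x j else 0) := by
      intro j
      rw [hB]
      by_cases h : i = j <;> simp [h]
    simp only [this, Finset.sum_sub_distrib, Finset.sum_ite_eq, Finset.mem_univ, if_true]
    rw [hS, Finset.mul_sum]
  -- characterization
  have hchar : ∀ x : Fin (m+1) → ZMod n, B.mulVec x = 0 ↔
      ((∀ j, (d : ZMod n) * x j = (d : ZMod n) * x 0) ∧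
        ((m : ZMod n) * (d : ZMod n)) * x 0 = 0) := by
    intro x
    constructor
    · intro h
      have h' : ∀ i, (d : ZMod n) * x i = (d : ZMod n) * S x := by
        intro i
        have := congrFun h i
        rw [hmv] at this
        simp only [Pi.zero_apply] at this
        linear_combination -this
      have hsum : (d : ZMod n) * S x = (m+1 : ℕ) * ((d : ZMod n) * x 0) := by
        rw [hS, Finset.mul_sum]
        rw [Finset.sum_congr rfl (fun j _ => (h' j).trans (h' 0).symm)]
        simp [Finset.card_univ, mul_comm]
      refine ⟨fun j => (h' j).trans (h' 0).symm, ?_⟩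
      have := (h' 0).trans hsum
      push_cast at this ⊢
      linear_combination -this
    · rintro ⟨h1, h2⟩
      funext i
      simp only [Pi.zero_apply]
      rw [hmv]
      have hsum : (d : ZMod n) * S x = (m+1 : ℕ) * ((d : ZMod n) * x 0) := by
        rw [hS, Finset.mul_sum, Finset.sum_congr rfl (fun j _ => h1 j)]
        simp [Finset.card_univ, mul_comm]
      rw [hsum, h1 i]
      push_cast
      linear_combination h2
  set K := {y : ZMod n // (d : ZMod n) * y = 0} with hK
  set A := {t : ZMod n // (((m : ℤ) * d : ℤ) : ZMod n) * t = 0} with hA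
  have hAcond : ∀ t : ZMod n, ((((m : ℤ) * d : ℤ) : ZMod n) * t = 0) ↔
      ((m : ZMod n) * (d : ZMod n)) * t = 0 := by
    intro t; push_cast; rfl
  have e : {x : Fin (m+1) → ZMod n // B.mulVec x = 0} ≃ (A × (Fin m → K)) := by
    refine
      { toFun := fun x => (⟨x.1 0, (hAcond _).mpr (((hchar x.1).mp x.2).2)⟩,
          fun i => ⟨x.1 i.succ - x.1 0, by
            have h1 := ((hchar x.1).mp x.2).1
            rw [mul_sub, h1 i.succ, sub_self]⟩),
        invFun := fun p => ⟨fun i => Fin.cases p.1.1 (fun j => p.1.1 + (p.2 j).1) i, ?_⟩,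
        left_inv := ?_, right_inv := ?_ }
    · rw [hchar]
      constructor
      · intro j
        refine Fin.cases ?_ (fun j => ?_) j
        · rfl
        · simp only [Fin.cases_succ, Fin.cases_zero, mul_add, (p.2 j).2, add_zero]
      · simpa using (hAcond _).mp p.1.2
    · intro x
      ext i
      refine Fin.cases ?_ (fun j => ?_) i <;> simp
    · rintro ⟨t, y⟩
      refine Prod.ext (Subtype.ext ?_) (funext fun i => Subtype.ext ?_) <;> simp
  rw [Nat.card_congr e, Nat.card_prod, Nat.card_fun]
  rw [hA, hK, kerCard n hn, kerCard n hn, Nat.card_eq_fintype_card, Fintype.card_fin]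
  have h1 : ((m + 1 : ℕ) : ℤ) - 1 = (m : ℤ) := by push_cast; ring
  rw [h1, Nat.succ_sub_one]
  ring
end

section
/- Let n, r be positive integers with gcd(r, n) = 1, and let c, d be integers. Set 𝒹₁ = gcd(c−d, n) and 𝒹₂ = gcd(c+(r−1)d, n). Then the number of x ∈ (ℤ/nℤ)^r with B·x = 0, where B is the r×r matrix with diagonal entries c and off-diagonal entries d, equals 𝒹₁^{r−1} · 𝒹₂. -/
/-!
Write `B = (c - d) I + d J` with `J` the all-ones matrix. Because `r` is invertible modulo `n`,
`x ↦ ((x i - x r)_{i < r}, ∑ x)` is a bijection `(ℤ/n)^r ≃ (ℤ/n)^(r-1) × ℤ/n`, and in these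
coordinates `B x = 0` splits into the independent equations `(c - d) (x i - x r) = 0` and
`(c + (r - 1) d) ∑ x = 0`. Finally `a z = 0` has exactly `gcd(a, n)` solutions in the cyclic
group `ℤ/n`.
-/

open Finset Matrix

theorem ZMod.card_intCast_mul_eq_zero (n : ℕ) [NeZero n] (a : ℤ) :
    Nat.card {z : ZMod n // (a : ZMod n) * z = 0} = a.gcd n := by
  have hmem (z : ZMod n) : (a : ZMod n) * z = 0 ↔ z ∈ (nsmulAddMonoidHom a.natAbs).ker := by
    rw [AddMonoidHom.mem_ker, nsmulAddMonoidHom_apply, nsmul_eq_mul]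
    rcases Int.natAbs_eq a with ha | ha <;> nth_rw 1 [ha] <;> simp
  rw [Nat.card_congr (Equiv.subtypeEquivRight hmem), IsAddCyclic.card_nsmulAddMonoidHom_ker,
    Nat.card_zmod, Int.gcd, Int.natAbs_natCast, Nat.gcd_comm]

section SumAndDifferences

variable {R : Type*} [CommRing R] {m : ℕ}

def diffLastAndSum (x : Fin (m + 1) → R) : (Fin m → R) × R :=
  (fun i => x i.castSucc - x (Fin.last m), ∑ j, x j)

theorem sum_eq_sum_sub_last_add (x : Fin (m + 1) → R) :
    ∑ j, x j = ∑ i : Fin m, (x i.castSucc - x (Fin.last m)) + (m + 1 : ℕ) * x (Fin.last m) := by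
  rw [Fin.sum_univ_castSucc, sum_sub_distrib, sum_const, card_univ, Fintype.card_fin,
    nsmul_eq_mul]
  push_cast
  ring

theorem diffLastAndSum_injective (hu : IsUnit ((m + 1 : ℕ) : R)) :
    Function.Injective (diffLastAndSum (R := R) (m := m)) := by
  intro x x' hxx'
  simp only [diffLastAndSum, Prod.mk.injEq, funext_iff] at hxx'
  obtain ⟨hdiff, hsum⟩ := hxx'
  have hlast : x (Fin.last m) = x' (Fin.last m) := by
    apply hu.mul_left_cancel
    rw [sum_eq_sum_sub_last_add x, sum_eq_sum_sub_last_add x', sum_congr rfl fun i _ => hdiff i]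
      at hsum
    exact add_left_cancel hsum
  funext j
  refine Fin.lastCases hlast (fun i => ?_) j
  linear_combination hdiff i + hlast

theorem diffLastAndSum_surjective (hu : IsUnit ((m + 1 : ℕ) : R)) :
    Function.Surjective (diffLastAndSum (R := R) (m := m)) := by
  rintro ⟨y, S⟩
  set t : R := ↑hu.unit⁻¹ * (S - ∑ i, y i)
  have ht : (m + 1 : ℕ) * t = S - ∑ i, y i := by rw [← mul_assoc, hu.mul_val_inv, one_mul]
  let x : Fin (m + 1) → R := Fin.snoc (fun i => y i + t) t
  have hx_last : x (Fin.last m) = t := Fin.snoc_last ..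
  have hx_castSucc (i : Fin m) : x i.castSucc = y i + t := Fin.snoc_castSucc ..
  refine ⟨x, Prod.ext (funext fun i => ?_) ?_⟩
  · simp [diffLastAndSum, hx_last, hx_castSucc]
  · simp only [diffLastAndSum]
    rw [sum_eq_sum_sub_last_add, hx_last, ht]
    simp [hx_castSucc]

noncomputable def diffLastAndSumEquiv (hu : IsUnit ((m + 1 : ℕ) : R)) :
    (Fin (m + 1) → R) ≃ (Fin m → R) × R :=
  Equiv.ofBijective diffLastAndSum ⟨diffLastAndSum_injective hu, diffLastAndSum_surjective hu⟩

theorem forall_mul_add_mul_sum_eq_zero_iff (hu : IsUnit ((m + 1 : ℕ) : R)) (a d : R)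
    (x : Fin (m + 1) → R) :
    (∀ j, a * x j + d * ∑ k, x k = 0) ↔
      (∀ i : Fin m, a * (x i.castSucc - x (Fin.last m)) = 0) ∧
        (a + (m + 1 : ℕ) * d) * ∑ k, x k = 0 := by
  constructor
  · intro hx
    refine ⟨fun i => by linear_combination hx i.castSucc - hx (Fin.last m), ?_⟩
    have := Finset.sum_eq_zero (s := univ) fun j _ => hx j
    rw [sum_add_distrib, ← mul_sum, sum_const, card_univ, Fintype.card_fin, nsmul_eq_mul] at this
    linear_combination this
  · rintro ⟨hdiff, hS⟩
    have haS : a * ∑ k, x k = (m + 1 : ℕ) * (a * x (Fin.last m)) := by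
      rw [sum_eq_sum_sub_last_add, mul_add, mul_sum, sum_eq_zero fun i _ => hdiff i]
      ring
    have hlast : a * x (Fin.last m) + d * ∑ k, x k = 0 := by
      apply hu.mul_left_cancel
      linear_combination hS - haS
    intro j
    refine Fin.lastCases hlast (fun i => ?_) j
    linear_combination hdiff i + hlast

theorem card_subtype_forall_mul_add_mul_sum_eq_zero (hu : IsUnit ((m + 1 : ℕ) : R)) (a d : R) :
    Nat.card {x : Fin (m + 1) → R // ∀ j, a * x j + d * ∑ k, x k = 0} =
      Nat.card {z : R // a * z = 0} ^ m * Nat.card {z : R // (a + (m + 1 : ℕ) * d) * z = 0} := by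
  let P : (Fin m → R) → Prop := fun y => ∀ i, a * y i = 0
  let Q : R → Prop := fun s => (a + (m + 1 : ℕ) * d) * s = 0
  rw [Nat.card_congr ((diffLastAndSumEquiv hu).subtypeEquiv (q := fun p => P p.1 ∧ Q p.2)
      (forall_mul_add_mul_sum_eq_zero_iff hu a d)),
    Nat.card_congr (Equiv.subtypeProdEquivProd (p := P) (q := Q)), Nat.card_prod,
    Nat.card_congr (Equiv.subtypePiEquivPi (p := fun _ z => a * z = 0)),
    Nat.card_pi, prod_const, card_univ, Fintype.card_fin]

end SumAndDifferences

theorem Matrix.of_ite_mulVec_apply {ι R : Type*} [Fintype ι] [DecidableEq ι] [Ring R]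
    (c d : R) (x : ι → R) (i : ι) :
    (Matrix.of (fun i j => if i = j then c else d) *ᵥ x) i = (c - d) * x i + d * ∑ j, x j := by
  have hterm (j : ι) :
      (if i = j then c else d) * x j = (if i = j then (c - d) * x j else 0) + d * x j := by
    split_ifs <;> simp [sub_mul]
  simp only [mulVec, dotProduct, of_apply, hterm, sum_add_distrib, sum_ite_eq, mem_univ,
    if_true, mul_sum]

theorem stmt_13 (n r : ℕ) (hn : 0 < n) (hr : 0 < r) (hco : Nat.gcd r n = 1) (c d : ℤ)
    (B : Matrix (Fin r) (Fin r) (ZMod n))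
    (hB : ∀ i j, B i j = if i = j then (c : ZMod n) else (d : ZMod n)) :
    Nat.card {x : Fin r → ZMod n // B.mulVec x = 0}
      = (Int.gcd (c - d) n) ^ (r - 1) * Int.gcd (c + (r - 1) * d) n := by
  have : NeZero n := ⟨hn.ne'⟩
  obtain ⟨m, rfl⟩ := Nat.exists_eq_add_one_of_ne_zero hr.ne'
  have hu : IsUnit ((m + 1 : ℕ) : ZMod n) := (ZMod.unitOfCoprime _ hco).isUnit
  have hB' : B = Matrix.of fun i j => if i = j then (c : ZMod n) else d := Matrix.ext hB
  have hker (x : Fin (m + 1) → ZMod n) :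
      B *ᵥ x = 0 ↔ ∀ j, ((c - d : ℤ) : ZMod n) * x j + d * ∑ k, x k = 0 := by
    simp only [funext_iff, hB', Matrix.of_ite_mulVec_apply, Int.cast_sub, Pi.zero_apply]
  have hb : ((c - d : ℤ) : ZMod n) + (m + 1 : ℕ) * d =
      ((c + ((m + 1 : ℕ) - 1 : ℤ) * d : ℤ) : ZMod n) := by
    push_cast; ring
  rw [Nat.card_congr (Equiv.subtypeEquivRight hker),
    card_subtype_forall_mul_add_mul_sum_eq_zero hu, hb, ZMod.card_intCast_mul_eq_zero,
    ZMod.card_intCast_mul_eq_zero, Nat.add_sub_cancel]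
end

section
/- Let n, r be positive integers with gcd(r, n) = 1, and c, d integers with 𝒹₁ = gcd(c−d, n) and 𝒹₂ = gcd(c+(r−1)d, n). Then gcd(𝒹₂, d·n/𝒹₁) = 𝒹₂ if gcd(r, n) = 1; equivalently, 𝒹₂ divides d·n/𝒹₁. -/
/-!
Put `𝒹 = gcd(𝒹₁, 𝒹₂)`. It divides `(c + (r - 1)d) - (c - d) = r d` and `n`, hence is coprime to
`r` and divides `d`. Since `𝒹₁, 𝒹₂ ∣ n`, also `lcm(𝒹₁, 𝒹₂) ∣ n`, so
`𝒹₁ 𝒹₂ = 𝒹 · lcm(𝒹₁, 𝒹₂)` divides `d n`, i.e. `𝒹₂ ∣ d n / 𝒹₁`.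
-/

section GCDMonoid

variable {α : Type*}

theorem mul_dvd_mul_of_gcd_dvd [CommMonoidWithZero α] [GCDMonoid α] {x y n d : α}
    (hx : x ∣ n) (hy : y ∣ n) (hd : gcd x y ∣ d) : x * y ∣ d * n :=
  (gcd_mul_lcm x y).dvd_iff_dvd_left.mp (mul_dvd_mul hd (lcm_dvd hx hy))

theorem gcd_gcd_dvd_of_sub_eq_mul [CommRing α] [IsDomain α] [GCDMonoid α] {a b r d n : α}
    (h : b - a = r * d) (hrn : IsCoprime r n) : gcd (gcd a n) (gcd b n) ∣ d := by
  have hsub : gcd (gcd a n) (gcd b n) ∣ b - a :=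
    dvd_sub ((gcd_dvd_right _ _).trans (gcd_dvd_left _ _))
      ((gcd_dvd_left _ _).trans (gcd_dvd_left _ _))
  have hn : gcd (gcd a n) (gcd b n) ∣ n := (gcd_dvd_left _ _).trans (gcd_dvd_right _ _)
  exact (hrn.symm.of_isCoprime_of_dvd_left hn).dvd_of_dvd_mul_left (h ▸ hsub)

end GCDMonoid

theorem stmt_14_general (n r : ℕ) (hco : Nat.gcd r n = 1) (c d : ℤ) :
    Int.gcd ((Int.gcd (c + (r - 1) * d) n : ℤ)) (d * n / (Int.gcd (c - d) n : ℤ))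
      = Int.gcd (c + (r - 1) * d) n ∧
    ((Int.gcd (c + (r - 1) * d) n : ℤ)) ∣ (d * n / (Int.gcd (c - d) n : ℤ)) := by
  have hrn : IsCoprime (r : ℤ) n := Int.isCoprime_iff_gcd_eq_one.mpr (by simpa using hco)
  have hdvd : (Int.gcd (c + (r - 1) * d) n : ℤ) ∣ d * n / Int.gcd (c - d) n := by
    apply Int.dvd_div_of_mul_dvd
    simp only [Int.coe_gcd]
    exact mul_dvd_mul_of_gcd_dvd (gcd_dvd_right _ _) (gcd_dvd_right _ _)
      (gcd_gcd_dvd_of_sub_eq_mul (by ring) hrn)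
  exact ⟨by exact_mod_cast Int.gcd_eq_left (Int.natCast_nonneg _) hdvd, hdvd⟩

theorem stmt_14 (n r : ℕ) (hn : 0 < n) (hr : 0 < r) (hco : Nat.gcd r n = 1) (c d : ℤ) :
    Int.gcd ((Int.gcd (c + (r - 1) * d) n : ℤ)) (d * n / (Int.gcd (c - d) n : ℤ))
      = Int.gcd (c + (r - 1) * d) n ∧
    ((Int.gcd (c + (r - 1) * d) n : ℤ)) ∣ (d * n / (Int.gcd (c - d) n : ℤ)) :=
  stmt_14_general n r hco c d
end

section
/- Let n, r be positive integers and c, d integers, with 𝒹₁ = gcd(c−d, n) and 𝒹₂ = gcd(c+(r−1)d, n). Define Λ_fin = {x ∈ (ℤ/nℤ)^r : B·x = 0}, where B is the r×r matrix with diagonal entries c and off-diagonal entries d. Then the map θ: x ↦ (ρ − x) mod (n/𝒹₁) (applied componentwise, with ρ = (r−1, r−2, ..., 1, 0)) is constant on Λ_fin if and only if gcd(𝒹₂, d·n/𝒹₁) = gcd(c, d, n). -/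
/-!
Write `k = n / 𝒹₁` and `g = gcd(c, d, n)`; then `gcd(d k, n) = k g`. If `X` is an integer lift of a
point of `Λ_fin`, the difference of two equations gives `n ∣ (c - d)(X j - X i)`, i.e. `k ∣ X j - X i`,
and removing `d ∑ⱼ (X j - X i)` from the `i`-th equation leaves `k g ∣ D X i` with `D = c + (r - 1) d`.
Conversely, for every `w` with `k g ∣ D w`, a Bézout relation `D w = d k a + n b` shows that the
constant vector `w` corrected by `-a k` in one coordinate lies in `Λ_fin`. So `θ` is constant on
`Λ_fin` iff `k g ∣ D w` forces `k ∣ w`, i.e. iff `gcd(D, k g) = g`, and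
`gcd(D, k g) = gcd(gcd(D, n), d k) = gcd(𝒹₂, d n / 𝒹₁)`.
-/

theorem Int.dvd_mul_iff_ediv_gcd_dvd {a N w : ℤ} (hN : N ≠ 0) :
    N ∣ a * w ↔ N / gcd a N ∣ w := by
  have hG : 0 < gcd a N := Int.gcd_pos_of_ne_zero_right a hN
  have hcop : IsCoprime (N / gcd a N) (a / gcd a N) := by
    rw [Int.isCoprime_iff_gcd_eq_one, Int.gcd_comm]; exact Int.gcd_ediv_gcd_ediv_gcd hG
  set G : ℤ := ((gcd a N : ℕ) : ℤ)
  calc N ∣ a * w ↔ G * (N / G) ∣ G * (a / G * w) := by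
        rw [Int.mul_ediv_cancel' (Int.gcd_dvd_right a N), ← mul_assoc,
          Int.mul_ediv_cancel' (Int.gcd_dvd_left a N)]
    _ ↔ N / G ∣ a / G * w := mul_dvd_mul_iff_left (by positivity)
    _ ↔ N / G ∣ w := ⟨hcop.dvd_of_dvd_mul_left, fun h => h.mul_left _⟩

theorem Int.forall_dvd_mul_imp_dvd_iff_gcd_eq {a : ℤ} {k g : ℕ} (hk : 0 < k) (hg : 0 < g)
    (hga : (g : ℤ) ∣ a) :
    (∀ w : ℤ, ((k * g : ℕ) : ℤ) ∣ a * w → (k : ℤ) ∣ w) ↔ gcd a (k * g : ℕ) = g := by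
  have hN : ((k * g : ℕ) : ℤ) ≠ 0 := by positivity
  have hgG : g ∣ gcd a (k * g : ℕ) := Int.dvd_gcd hga (by push_cast; exact dvd_mul_left _ _)
  have hGN : gcd a (k * g : ℕ) ∣ k * g := by
    simpa only [Int.natAbs_natCast] using Int.gcd_dvd_natAbs_right a (k * g : ℕ)
  simp_rw [Int.dvd_mul_iff_ediv_gcd_dvd hN]
  calc (∀ w : ℤ, ((k * g : ℕ) : ℤ) / gcd a (k * g : ℕ) ∣ w → (k : ℤ) ∣ w)
      ↔ k ∣ k * g / gcd a (k * g : ℕ) := by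
        rw [← Int.natCast_dvd_natCast, Int.natCast_div]
        exact ⟨fun h => h _ dvd_rfl, fun h _ => h.trans⟩
    _ ↔ gcd a (k * g : ℕ) ∣ g := by
        rw [Nat.dvd_div_iff_mul_dvd hGN, mul_comm, Nat.mul_dvd_mul_iff_left hk]
    _ ↔ gcd a (k * g : ℕ) = g := ⟨fun h => Nat.dvd_antisymm h hgG, fun h => h.dvd⟩

theorem Matrix.mulVec_eq_of_apply_eq_ite {ι R : Type*} [Fintype ι] [DecidableEq ι] [CommRing R]
    {B : Matrix ι ι R} {a b : R} (hB : ∀ i j, B i j = if i = j then a else b) (x : ι → R) :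
    B.mulVec x = fun i => (a - b) * x i + b * ∑ j, x j := by
  ext i
  calc B.mulVec x i = ∑ j, ((a - b) * (if i = j then x j else 0) + b * x j) := by
        refine Finset.sum_congr rfl fun j _ => ?_
        simp only [hB]; split_ifs <;> ring
    _ = (a - b) * x i + b * ∑ j, x j := by
        rw [Finset.sum_add_distrib, ← Finset.mul_sum, ← Finset.mul_sum, Finset.sum_ite_eq,
          if_pos (Finset.mem_univ i)]

section Kernel

variable {n k : ℕ} {c d : ℤ}

theorem dvd_sub_mul_iff (hn : 0 < n) (hk : n = Int.gcd (c - d) n * k) {w : ℤ} :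
    (n : ℤ) ∣ (c - d) * w ↔ (k : ℤ) ∣ w := by
  have hd₁ : 0 < Int.gcd (c - d) n := by simp [Int.gcd_pos_iff, hn.ne']
  have hquot : (n : ℤ) / Int.gcd (c - d) n = k := by
    rw [← Int.natCast_div, Nat.div_eq_of_eq_mul_right hd₁ hk]
  rw [Int.dvd_mul_iff_ediv_gcd_dvd (by exact_mod_cast hn.ne'), hquot]

theorem gcd_mul_eq_mul_gcd (hk : n = Int.gcd (c - d) n * k) :
    Int.gcd (d * k) n = k * Int.gcd c (Int.gcd d n) := by
  have hn : (n : ℤ) = (Int.gcd (c - d) n : ℤ) * k := by exact_mod_cast hk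
  rw [hn, Int.gcd_mul_right, Int.natAbs_natCast, mul_comm, ← hn, ← Int.gcd_assoc,
    Int.gcd_sub_self_right, Int.gcd_comm d c, Int.gcd_assoc]

theorem mul_gcd_dvd_of_forall_dvd {r : ℕ} (hn : 0 < n) (hk : n = Int.gcd (c - d) n * k)
    {X : Fin r → ℤ} (hX : ∀ i, (n : ℤ) ∣ (c - d) * X i + d * ∑ j, X j) (i : Fin r) :
    ((k * Int.gcd c (Int.gcd d n) : ℕ) : ℤ) ∣ (c + (r - 1) * d) * X i := by
  have hdiff : ∀ j, (k : ℤ) ∣ X j - X i := by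
    intro j
    rw [← dvd_sub_mul_iff hn hk, mul_sub, ← add_sub_add_right_eq_sub _ _ (d * ∑ j, X j)]
    exact dvd_sub (hX j) (hX i)
  have hsplit : (c - d) * X i + d * ∑ j, X j
      = (c + (r - 1) * d) * X i + d * ∑ j, (X j - X i) := by
    simp only [Finset.sum_sub_distrib, Finset.sum_const, Finset.card_univ, Fintype.card_fin,
      nsmul_eq_mul]
    ring
  rw [← gcd_mul_eq_mul_gcd hk]
  have hrest : (Int.gcd (d * k) n : ℤ) ∣ d * ∑ j, (X j - X i) :=
    (Int.gcd_dvd_left _ _).trans (mul_dvd_mul_left d (Finset.dvd_sum fun j _ => hdiff j))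
  exact (dvd_add_left hrest).1 (hsplit ▸ (Int.gcd_dvd_right _ _).trans (hX i))

theorem exists_forall_dvd_of_mul_gcd_dvd {r : ℕ} (hn : 0 < n) (hk : n = Int.gcd (c - d) n * k)
    (i₀ : Fin r) {w : ℤ}
    (hw : ((k * Int.gcd c (Int.gcd d n) : ℕ) : ℤ) ∣ (c + (r - 1) * d) * w) :
    ∃ X : Fin r → ℤ, (∀ i, (n : ℤ) ∣ (c - d) * X i + d * ∑ j, X j) ∧ (k : ℤ) ∣ X i₀ - w := by
  rw [← gcd_mul_eq_mul_gcd hk] at hw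
  obtain ⟨t, ht⟩ := hw
  set a := Int.gcdA (d * k) n * t
  set b := Int.gcdB (d * k) n * t
  have hbezout : (c + (r - 1) * d) * w = d * k * a + n * b := by
    rw [ht, Int.gcd_eq_gcd_ab]; ring
  set e : Fin r → ℤ := Pi.single i₀ (a * k)
  have hsum : ∑ j, e j = a * k := by simp [e]
  refine ⟨fun i => w - e i, fun i => ?_, by simp [e]⟩
  · have hcoord : (c - d) * (w - e i) + d * ∑ j, (w - e j) = n * b - (c - d) * e i := by
      simp only [Finset.sum_sub_distrib, Finset.sum_const, Finset.card_univ, Fintype.card_fin,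
        nsmul_eq_mul, hsum]
      linear_combination hbezout
    rw [hcoord]
    refine dvd_sub (dvd_mul_right _ _) ((dvd_sub_mul_iff hn hk).2 ?_)
    simp only [e, Pi.single_apply]
    split_ifs
    exacts [dvd_mul_left _ _, dvd_zero _]

theorem forall_dvd_iff_forall_mul_gcd_dvd_imp_dvd {r : ℕ} (hr : 0 < r) (hn : 0 < n)
    (hk : n = Int.gcd (c - d) n * k) :
    (∀ X : Fin r → ℤ, (∀ i, (n : ℤ) ∣ (c - d) * X i + d * ∑ j, X j) → ∀ i, (k : ℤ) ∣ X i) ↔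
      ∀ w : ℤ, ((k * Int.gcd c (Int.gcd d n) : ℕ) : ℤ) ∣ (c + (r - 1) * d) * w →
        (k : ℤ) ∣ w := by
  constructor
  · intro h w hw
    obtain ⟨X, hX, hXw⟩ := exists_forall_dvd_of_mul_gcd_dvd hn hk ⟨0, hr⟩ hw
    simpa using dvd_sub (h X hX ⟨0, hr⟩) hXw
  · intro h X hX i
    exact h _ (mul_gcd_dvd_of_forall_dvd hn hk hX i)

end Kernel

theorem forall_cast_eq_zero_iff_forall_dvd {n k r : ℕ} (hkn : k ∣ n) {c d : ℤ}
    {B : Matrix (Fin r) (Fin r) (ZMod n)}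
    (hB : ∀ i j, B i j = if i = j then (c : ZMod n) else (d : ZMod n)) :
    (∀ x : Fin r → ZMod n, B.mulVec x = 0 → ∀ i, (ZMod.cast (x i) : ZMod k) = 0) ↔
      ∀ X : Fin r → ℤ, (∀ i, (n : ℤ) ∣ (c - d) * X i + d * ∑ j, X j) → ∀ i, (k : ℤ) ∣ X i := by
  have hker : ∀ X : Fin r → ℤ, B.mulVec (fun i => (X i : ZMod n)) = 0 ↔
      ∀ i, (n : ℤ) ∣ (c - d) * X i + d * ∑ j, X j := by
    intro X
    simp only [Matrix.mulVec_eq_of_apply_eq_ite hB, funext_iff, Pi.zero_apply,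
      ← ZMod.intCast_zmod_eq_zero_iff_dvd]
    push_cast
    rfl
  have hcast : ∀ z : ℤ, (ZMod.cast (z : ZMod n) : ZMod k) = 0 ↔ (k : ℤ) ∣ z := fun z => by
    rw [ZMod.cast_intCast hkn, ZMod.intCast_zmod_eq_zero_iff_dvd]
  constructor
  · intro h X hX i
    exact (hcast _).1 (h _ ((hker X).2 hX) i)
  · intro h x hx i
    obtain ⟨X, rfl⟩ : ∃ X : Fin r → ℤ, (fun i => (X i : ZMod n)) = x :=
      ⟨fun i => ZMod.cast (x i), funext fun i => ZMod.intCast_zmod_cast _⟩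
    exact (hcast _).2 (h X ((hker X).1 hx) i)

theorem stmt_18 (n r : ℕ) (hn : 0 < n) (hr : 0 < r) (c d : ℤ)
    (B : Matrix (Fin r) (Fin r) (ZMod n))
    (hB : ∀ i j, B i j = if i = j then (c : ZMod n) else (d : ZMod n)) :
    (∀ x y : Fin r → ZMod n, B.mulVec x = 0 → B.mulVec y = 0 →
      (fun i : Fin r => ((r - 1 - i.val : ℕ) : ZMod (n / Int.gcd (c - d) n)) -
        (ZMod.cast (x i) : ZMod (n / Int.gcd (c - d) n)))
      = (fun i : Fin r => ((r - 1 - i.val : ℕ) : ZMod (n / Int.gcd (c - d) n)) -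
        (ZMod.cast (y i) : ZMod (n / Int.gcd (c - d) n)))) ↔
    Int.gcd ((Int.gcd (c + (r - 1) * d) n : ℤ)) (d * n / (Int.gcd (c - d) n : ℤ))
      = Int.gcd c (Int.gcd d (n : ℤ) : ℤ) := by
  set k := n / Int.gcd (c - d) n
  have hd₁ : 0 < Int.gcd (c - d) n := by simp [Int.gcd_pos_iff, hn.ne']
  have hd₁n : Int.gcd (c - d) n ∣ n := by simpa using Int.gcd_dvd_natAbs_right (c - d) n
  have hk : n = Int.gcd (c - d) n * k := (Nat.mul_div_cancel' hd₁n).symm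
  have hk0 : 0 < k := Nat.div_pos (Nat.le_of_dvd hn hd₁n) hd₁
  have hg : 0 < Int.gcd c (Int.gcd d n) := by simp [Int.gcd_pos_iff, hn.ne']
  have hgD : (Int.gcd c (Int.gcd d n) : ℤ) ∣ c + (r - 1) * d :=
    dvd_add (Int.gcd_dvd_left _ _)
      (Dvd.dvd.mul_left ((Int.gcd_dvd_right _ _).trans (Int.gcd_dvd_left _ _)) _)
  have hconst : (∀ x y : Fin r → ZMod n, B.mulVec x = 0 → B.mulVec y = 0 →
      (fun i : Fin r => ((r - 1 - i.val : ℕ) : ZMod k) - (ZMod.cast (x i) : ZMod k))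
        = (fun i : Fin r => ((r - 1 - i.val : ℕ) : ZMod k) - (ZMod.cast (y i) : ZMod k))) ↔
      ∀ x : Fin r → ZMod n, B.mulVec x = 0 → ∀ i, (ZMod.cast (x i) : ZMod k) = 0 := by
    refine ⟨fun h x hx i => ?_, fun h x y hx hy => funext fun i => by rw [h x hx, h y hy]⟩
    simpa using congrFun (h x 0 hx (Matrix.mulVec_zero B)) i
  have hrhs : Int.gcd (Int.gcd (c + (r - 1) * d) n) (d * n / Int.gcd (c - d) n)
      = Int.gcd (c + (r - 1) * d) (k * Int.gcd c (Int.gcd d n) : ℕ) := by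
    rw [Int.mul_ediv_assoc _ (by exact_mod_cast hd₁n), ← Int.natCast_div, Int.gcd_assoc,
      Int.gcd_comm (n : ℤ), gcd_mul_eq_mul_gcd hk]
  rw [hconst, forall_cast_eq_zero_iff_forall_dvd (Dvd.intro_left _ hk.symm) hB,
    forall_dvd_iff_forall_mul_gcd_dvd_imp_dvd hr hn hk,
    Int.forall_dvd_mul_imp_dvd_iff_gcd_eq hk0 hg hgD, hrhs]
end

section
/- Let n, r be positive integers and c, d integers, with 𝒹₁ = gcd(c−d, n). For x, y ∈ ℤ^r both satisfying B·x ≡ 0 and B·y ≡ 0 (mod n), where B is the r×r matrix with diagonal entries c and off-diagonal entries d, write x = x₁·(1,...,1) + (n/𝒹₁)·(0, v₂, ..., v_r) and y = y₁·(1,...,1) + (n/𝒹₁)·(0, v₂', ..., v_r') (mod n). Then (c+(r−1)d)·(y₁ − x₁) is congruent modulo n to an integer multiple of d·n/𝒹₁. -/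
/-!
Row `i₀` of `B z` is `(c - d) z_{i₀} + d ∑ⱼ z_j`. Substituting `z ≡ z₁ 𝟙 + m w` (`m = n / 𝒹₁`, `w i₀ = 0`)
turns the row condition into `(c + (r - 1) d) z₁ ≡ -d m ∑ⱼ w_j (mod n)`; subtracting these
relations for `x` and `y` gives the claim with `k = ∑ v - ∑ v'`.
-/

open Finset

theorem Matrix.mulVec_apply_of_diag_offDiag {ι R : Type*} [Fintype ι] [DecidableEq ι]
    [CommRing R] {B : Matrix ι ι R} {c d : R} (hB : ∀ i j, B i j = if i = j then c else d)
    (z : ι → R) (i : ι) :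
    B.mulVec z i = (c - d) * z i + d * ∑ j, z j := by
  have hrow : ∀ j, B i j * z j = (if i = j then (c - d) * z j else 0) + d * z j := by
    intro j
    rw [hB]
    split_ifs <;> ring
  simp only [Matrix.mulVec, dotProduct, hrow, sum_add_distrib, sum_ite_eq, mem_univ, if_true,
    mul_sum]

theorem mul_modEq_neg_of_mulVec_apply_modEq_zero {ι : Type*} [Fintype ι] [DecidableEq ι]
    {n c d m z₁ : ℤ} {B : Matrix ι ι ℤ} (hB : ∀ i j, B i j = if i = j then c else d)
    {z w : ι → ℤ} {i₀ : ι} (hz : B.mulVec z i₀ ≡ 0 [ZMOD n])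
    (hzw : ∀ i, z i ≡ z₁ + m * w i [ZMOD n]) (hw : w i₀ = 0) :
    (c + (Fintype.card ι - 1) * d) * z₁ ≡ -(d * m * ∑ j, w j) [ZMOD n] := by
  have hzi₀ : z₁ ≡ z i₀ [ZMOD n] := by simpa [hw] using (hzw i₀).symm
  have hsum : ∑ j, (z₁ + m * w j) ≡ ∑ j, z j [ZMOD n] :=
    Int.ModEq.sum fun j _ => (hzw j).symm
  calc (c + (Fintype.card ι - 1) * d) * z₁
      = (c - d) * z₁ + d * ∑ j, (z₁ + m * w j) - d * m * ∑ j, w j := by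
        rw [sum_add_distrib, sum_const, card_univ, nsmul_eq_mul, ← mul_sum]
        ring
    _ ≡ (c - d) * z i₀ + d * ∑ j, z j - d * m * ∑ j, w j [ZMOD n] := by gcongr
    _ = B.mulVec z i₀ - d * m * ∑ j, w j := by rw [Matrix.mulVec_apply_of_diag_offDiag hB]
    _ ≡ 0 - d * m * ∑ j, w j [ZMOD n] := hz.sub_right _
    _ = -(d * m * ∑ j, w j) := zero_sub _

theorem stmt_19_general (n r : ℕ) (hr : 0 < r) (c d : ℤ)
    (B : Matrix (Fin r) (Fin r) ℤ)
    (hB : ∀ i j, B i j = if i = j then c else d)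
    (x y : Fin r → ℤ)
    (hx : ∀ i, B.mulVec x i ≡ 0 [ZMOD (n : ℤ)])
    (hy : ∀ i, B.mulVec y i ≡ 0 [ZMOD (n : ℤ)])
    (x1 y1 : ℤ) (v v' : Fin r → ℤ)
    (hv0 : v ⟨0, hr⟩ = 0) (hv'0 : v' ⟨0, hr⟩ = 0)
    (hxdec : ∀ i, x i ≡ x1 + ((n : ℤ) / (Int.gcd (c - d) n : ℤ)) * v i [ZMOD (n : ℤ)])
    (hydec : ∀ i, y i ≡ y1 + ((n : ℤ) / (Int.gcd (c - d) n : ℤ)) * v' i [ZMOD (n : ℤ)]) :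
    ∃ k : ℤ, (c + (r - 1) * d) * (y1 - x1) ≡ k * (d * n / (Int.gcd (c - d) n : ℤ)) [ZMOD (n : ℤ)] := by
  set m : ℤ := (n : ℤ) / (Int.gcd (c - d) n : ℤ)
  have hdm : d * n / (Int.gcd (c - d) n : ℤ) = d * m :=
    Int.mul_ediv_assoc d (Int.gcd_dvd_right _ _)
  have hxrow := mul_modEq_neg_of_mulVec_apply_modEq_zero hB (hx ⟨0, hr⟩) hxdec hv0
  have hyrow := mul_modEq_neg_of_mulVec_apply_modEq_zero hB (hy ⟨0, hr⟩) hydec hv'0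
  rw [Fintype.card_fin] at hxrow hyrow
  refine ⟨∑ j, v j - ∑ j, v' j, ?_⟩
  rw [hdm]
  calc (c + (r - 1) * d) * (y1 - x1)
      = (c + (r - 1) * d) * y1 - (c + (r - 1) * d) * x1 := by ring
    _ ≡ -(d * m * ∑ j, v' j) - -(d * m * ∑ j, v j) [ZMOD n] := hyrow.sub hxrow
    _ = (∑ j, v j - ∑ j, v' j) * (d * m) := by ring

theorem stmt_19 (n r : ℕ) (hn : 0 < n) (hr : 0 < r) (c d : ℤ)
    (B : Matrix (Fin r) (Fin r) ℤ)
    (hB : ∀ i j, B i j = if i = j then c else d)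
    (x y : Fin r → ℤ)
    (hx : ∀ i, B.mulVec x i ≡ 0 [ZMOD (n : ℤ)])
    (hy : ∀ i, B.mulVec y i ≡ 0 [ZMOD (n : ℤ)])
    (x1 y1 : ℤ) (v v' : Fin r → ℤ)
    (hv0 : v ⟨0, hr⟩ = 0) (hv'0 : v' ⟨0, hr⟩ = 0)
    (hxdec : ∀ i, x i ≡ x1 + ((n : ℤ) / (Int.gcd (c - d) n : ℤ)) * v i [ZMOD (n : ℤ)])
    (hydec : ∀ i, y i ≡ y1 + ((n : ℤ) / (Int.gcd (c - d) n : ℤ)) * v' i [ZMOD (n : ℤ)]) :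
    ∃ k : ℤ, (c + (r - 1) * d) * (y1 - x1) ≡ k * (d * n / (Int.gcd (c - d) n : ℤ)) [ZMOD (n : ℤ)] :=
  stmt_19_general n r hr c d B hB x y hx hy x1 y1 v v' hv0 hv'0 hxdec hydec
end
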